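/- arXiv:2106.08466 — 3 statements merged into one kernel-verified Lean document; each statement's English description precedes it below -/
import Mathlib

section
/- The system of Volterra integral equations S̄(t) = S̄(0) - λ∫₀ᵗ S̄(s) Ī(s) ds and Ī(t) = Ī(0) F₀^c(t) + λ∫₀ᵗ F^c(t-s) S̄(s) Ī(s) ds has a unique solution (S̄, Ī) with values in [0,1]² on [0, ∞), where F₀^c and F^c are survival functions (nonincreasing, right-continuous, taking values in [0,1], equal to 1 at 0⁻ limits bounded by 1). -/
/-!
Replacing `S * I` by `rate (S, I)`, the product of the two values clamped to `[0, 1]`, makes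
the nonlinearity bounded and globally Lipschitz, and turns the system into a fixed-point
equation `X = Φ X`. The Picard–Gronwall estimate `‖Φ^[n] X t - Φ^[n] Y t‖ ≤ (2λt)ⁿ / n!` shows
that the iterates converge pointwise to a measurable fixed point (dominated convergence passes
the limit through `Φ`) and that fixed points are unique. A fixed point stays in `[0, 1]²`:
`S` is nonincreasing, `S + I ≤ S(0) + I(0)` because `Fᶜ ≤ 1`, and `S` cannot become negative
because the rate vanishes as soon as `S` reaches `0`. On `[0, 1]²` the clamping is inactive,
so fixed points are exactly the solutions with values in `[0, 1]²`.
-/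

open MeasureTheory Set Filter Topology Function

namespace VolterraSIR

noncomputable def rate (p : ℝ × ℝ) : ℝ :=
  (projIcc 0 1 zero_le_one p.1 : ℝ) * projIcc 0 1 zero_le_one p.2

lemma rate_nonneg (p : ℝ × ℝ) : 0 ≤ rate p :=
  mul_nonneg (projIcc 0 1 zero_le_one p.1).2.1 (projIcc 0 1 zero_le_one p.2).2.1

lemma rate_le_one (p : ℝ × ℝ) : rate p ≤ 1 :=
  mul_le_one₀ (projIcc 0 1 zero_le_one p.1).2.2 (projIcc 0 1 zero_le_one p.2).2.1
    (projIcc 0 1 zero_le_one p.2).2.2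

lemma abs_rate_le_one (p : ℝ × ℝ) : |rate p| ≤ 1 := by
  rw [abs_of_nonneg (rate_nonneg p)]
  exact rate_le_one p

lemma rate_eq_mul {p : ℝ × ℝ} (h₁ : p.1 ∈ Icc (0:ℝ) 1) (h₂ : p.2 ∈ Icc (0:ℝ) 1) :
    rate p = p.1 * p.2 := by
  simp only [rate, projIcc_of_mem _ h₁, projIcc_of_mem _ h₂]

lemma rate_eq_zero_of_fst_nonpos {p : ℝ × ℝ} (h : p.1 ≤ 0) : rate p = 0 := by
  simp only [rate, projIcc_of_le_left _ h, zero_mul]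

lemma continuous_rate : Continuous rate := by
  unfold rate; fun_prop

lemma measurable_rate : Measurable rate := continuous_rate.measurable

lemma abs_rate_sub_rate_le (p q : ℝ × ℝ) : |rate p - rate q| ≤ 2 * ‖p - q‖ := by
  set a : ℝ := (projIcc 0 1 zero_le_one p.1 : ℝ)
  set b : ℝ := (projIcc 0 1 zero_le_one p.2 : ℝ)
  set c : ℝ := (projIcc 0 1 zero_le_one q.1 : ℝ)
  set d : ℝ := (projIcc 0 1 zero_le_one q.2 : ℝ)
  have hac : |a - c| ≤ ‖p - q‖ :=
    (abs_projIcc_sub_projIcc _).trans (norm_fst_le (p - q))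
  have hbd : |b - d| ≤ ‖p - q‖ :=
    (abs_projIcc_sub_projIcc _).trans (norm_snd_le (p - q))
  have ha : |a| ≤ 1 := abs_le.2 ⟨by linarith [(projIcc 0 1 zero_le_one p.1).2.1],
    (projIcc 0 1 zero_le_one p.1).2.2⟩
  have hd : |d| ≤ 1 := abs_le.2 ⟨by linarith [(projIcc 0 1 zero_le_one q.2).2.1],
    (projIcc 0 1 zero_le_one q.2).2.2⟩
  calc |rate p - rate q| = |a * (b - d) + d * (a - c)| := by
        show |a * b - c * d| = _; ring_nf
    _ ≤ |a| * |b - d| + |d| * |a - c| := by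
        rw [← abs_mul, ← abs_mul]; exact abs_add_le _ _
    _ ≤ 1 * ‖p - q‖ + 1 * ‖p - q‖ := by gcongr
    _ = 2 * ‖p - q‖ := by ring

lemma measurable_setIntegral_Ioc {H : ℝ → ℝ → ℝ} (hH : Measurable (uncurry H)) (a : ℝ) :
    Measurable fun t => ∫ s in Ioc a t, H t s := by
  have hset : MeasurableSet {q : ℝ × ℝ | q.2 ∈ Ioc a q.1} :=
    (measurableSet_lt measurable_const measurable_snd).inter
      (measurableSet_le measurable_snd measurable_fst)
  have hind : ∀ t, ∫ s in Ioc a t, H t s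
      = ∫ s, {q : ℝ × ℝ | q.2 ∈ Ioc a q.1}.indicator (uncurry H) (t, s) := fun t => by
    rw [← integral_indicator measurableSet_Ioc]
    rfl
  simp only [hind]
  exact ((hH.indicator hset).stronglyMeasurable.integral_prod_right').measurable

lemma integrableOn_Ioc_of_abs_le {f : ℝ → ℝ} (hf : Measurable f) {a b C : ℝ}
    (h : ∀ s ∈ Ioc a b, |f s| ≤ C) : IntegrableOn f (Ioc a b) :=
  .of_bound measure_Ioc_lt_top hf.aestronglyMeasurable C
    ((ae_restrict_iff' measurableSet_Ioc).2 (ae_of_all _ h))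

lemma abs_mul_le_abs_of_mem_Icc {a x : ℝ} (ha : a ∈ Icc (0:ℝ) 1) : |a * x| ≤ |x| := by
  rw [abs_mul]
  exact mul_le_of_le_one_left (abs_nonneg x) (abs_le.2 ⟨by linarith [ha.1], ha.2⟩)

lemma mul_integral_le_pow_div_factorial {K C t : ℝ} (hK : 0 ≤ K) (ht : 0 ≤ t) {n : ℕ}
    {f : ℝ → ℝ} (hf : ∀ s ∈ Ioc 0 t, 0 ≤ f s)
    (hle : ∀ s ∈ Ioc 0 t, f s ≤ C * (K * s) ^ n / n.factorial) :
    K * ∫ s in Ioc 0 t, f s ≤ C * (K * t) ^ (n + 1) / (n + 1).factorial := by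
  have hbound : ∫ s in Ioc 0 t, C * (K * s) ^ n / n.factorial
      = C * K ^ n / n.factorial * (t ^ (n + 1) / (n + 1)) := by
    have : ∀ s : ℝ, C * (K * s) ^ n / n.factorial = C * K ^ n / n.factorial * s ^ n :=
      fun s => by ring
    simp_rw [this, ← intervalIntegral.integral_of_le ht, intervalIntegral.integral_const_mul,
      integral_pow]
    simp
  have hmono : ∫ s in Ioc 0 t, f s ≤ ∫ s in Ioc 0 t, C * (K * s) ^ n / n.factorial :=
    integral_mono_of_nonneg ((ae_restrict_iff' measurableSet_Ioc).2 (ae_of_all _ hf))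
      (Continuous.integrableOn_Ioc (by fun_prop))
      ((ae_restrict_iff' measurableSet_Ioc).2 (ae_of_all _ hle))
  calc K * ∫ s in Ioc 0 t, f s ≤ K * (C * K ^ n / n.factorial * (t ^ (n + 1) / (n + 1))) := by
        rw [← hbound]; exact mul_le_mul_of_nonneg_left hmono hK
    _ = C * (K * t) ^ (n + 1) / (n + 1).factorial := by
        rw [mul_pow, Nat.factorial_succ]; push_cast; field_simp; ring

section VolterraMap

variable (lam : ℝ) (F0c Fc : ℝ → ℝ) (S0 I0 : ℝ)

noncomputable def volterraMap (X : ℝ → ℝ × ℝ) (t : ℝ) : ℝ × ℝ :=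
  (S0 - lam * ∫ s in Ioc 0 t, rate (X s),
    I0 * F0c t + lam * ∫ s in Ioc 0 t, Fc (t - s) * rate (X s))

local notation "Φ" => volterraMap lam F0c Fc S0 I0

variable {lam F0c Fc S0 I0}

lemma volterraMap_congr {X Y : ℝ → ℝ × ℝ} (h : ∀ s, 0 < s → X s = Y s) : Φ X = Φ Y := by
  funext t
  have hXY : ∀ s ∈ Ioc 0 t, rate (X s) = rate (Y s) := fun s hs => by
    rw [h s hs.1]
  simp only [volterraMap, setIntegral_congr_fun measurableSet_Ioc hXY,
    setIntegral_congr_fun measurableSet_Ioc fun s hs => congrArg (Fc (t - s) * ·) (hXY s hs)]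

lemma volterraMap_of_nonpos (X : ℝ → ℝ × ℝ) {t : ℝ} (ht : t ≤ 0) :
    Φ X t = (S0, I0 * F0c t) := by
  simp [volterraMap, Ioc_eq_empty_of_le ht]

lemma measurable_volterraMap (hF0c : Measurable F0c) (hFc : Measurable Fc)
    {X : ℝ → ℝ × ℝ} (hX : Measurable X) : Measurable (Φ X) := by
  have hr : Measurable fun p : ℝ × ℝ => rate (X p.2) :=
    measurable_rate.comp (hX.comp measurable_snd)
  exact (measurable_const.sub
    ((measurable_setIntegral_Ioc (H := fun _ s => rate (X s)) hr 0).const_mul lam)).prodMk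
    ((measurable_const.mul hF0c).add ((measurable_setIntegral_Ioc
      (H := fun t s => Fc (t - s) * rate (X s))
      ((hFc.comp (measurable_fst.sub measurable_snd)).mul hr) 0).const_mul lam))

lemma measurable_iterate_volterraMap (hF0c : Measurable F0c) (hFc : Measurable Fc)
    {X : ℝ → ℝ × ℝ} (hX : Measurable X) (n : ℕ) : Measurable (Φ^[n] X) := by
  induction n with
  | zero => exact hX
  | succ n ih => rw [iterate_succ_apply']; exact measurable_volterraMap hF0c hFc ih

lemma norm_volterraMap_sub_le (hlam : 0 ≤ lam) (hFc : Measurable Fc)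
    (hFc_mem : ∀ t, 0 ≤ t → Fc t ∈ Icc (0:ℝ) 1) {X Y : ℝ → ℝ × ℝ}
    (hX : Measurable X) (hY : Measurable Y) (t : ℝ) :
    ‖Φ X t - Φ Y t‖ ≤ lam * ∫ s in Ioc 0 t, |rate (X s) - rate (Y s)| := by
  have hK : ∀ s ∈ Ioc 0 t, Fc (t - s) ∈ Icc (0:ℝ) 1 := fun s hs =>
    hFc_mem _ (sub_nonneg.2 hs.2)
  have hKm : Measurable fun s => Fc (t - s) := hFc.comp (measurable_const.sub measurable_id)
  have hint : ∀ {Z : ℝ → ℝ × ℝ}, Measurable Z →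
      IntegrableOn (fun s => rate (Z s)) (Ioc 0 t) ∧
      IntegrableOn (fun s => Fc (t - s) * rate (Z s)) (Ioc 0 t) := fun hZ =>
    ⟨integrableOn_Ioc_of_abs_le (measurable_rate.comp hZ) fun s _ => abs_rate_le_one _,
      integrableOn_Ioc_of_abs_le (hKm.mul (measurable_rate.comp hZ)) fun s hs =>
        (abs_mul_le_abs_of_mem_Icc (hK s hs)).trans (abs_rate_le_one _)⟩
  have hδ : IntegrableOn (fun s => |rate (X s) - rate (Y s)|) (Ioc 0 t) :=
    ((hint hX).1.sub (hint hY).1).abs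
  have h₁ : ‖(∫ s in Ioc 0 t, rate (X s)) - ∫ s in Ioc 0 t, rate (Y s)‖
      ≤ ∫ s in Ioc 0 t, |rate (X s) - rate (Y s)| := by
    rw [← integral_sub (hint hX).1 (hint hY).1]
    exact norm_integral_le_of_norm_le hδ (ae_of_all _ fun s => le_rfl)
  have h₂ : ‖(∫ s in Ioc 0 t, Fc (t - s) * rate (X s))
      - ∫ s in Ioc 0 t, Fc (t - s) * rate (Y s)‖ ≤ ∫ s in Ioc 0 t, |rate (X s) - rate (Y s)| := by
    rw [← integral_sub (hint hX).2 (hint hY).2]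
    refine norm_integral_le_of_norm_le hδ ((ae_restrict_iff' measurableSet_Ioc).2
      (ae_of_all _ fun s hs => ?_))
    rw [← mul_sub]
    exact abs_mul_le_abs_of_mem_Icc (hK s hs)
  have hdiff : Φ X t - Φ Y t =
      (-(lam * ((∫ s in Ioc 0 t, rate (X s)) - ∫ s in Ioc 0 t, rate (Y s))),
        lam * ((∫ s in Ioc 0 t, Fc (t - s) * rate (X s))
          - ∫ s in Ioc 0 t, Fc (t - s) * rate (Y s))) := by
    ext <;> simp only [volterraMap, Prod.fst_sub, Prod.snd_sub] <;> ring
  rw [hdiff, Prod.norm_def, norm_neg, norm_mul, norm_mul, Real.norm_of_nonneg hlam]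
  exact max_le (mul_le_mul_of_nonneg_left h₁ hlam) (mul_le_mul_of_nonneg_left h₂ hlam)

lemma norm_iterate_volterraMap_sub_le (hlam : 0 ≤ lam) (hF0c : Measurable F0c)
    (hFc : Measurable Fc) (hFc_mem : ∀ t, 0 ≤ t → Fc t ∈ Icc (0:ℝ) 1) {X Y : ℝ → ℝ × ℝ}
    (hX : Measurable X) (hY : Measurable Y) (n : ℕ) (t : ℝ) :
    ‖Φ^[n + 1] X t - Φ^[n + 1] Y t‖ ≤ (2 * lam * |t|) ^ (n + 1) / (n + 1).factorial := by
  rcases lt_or_ge t 0 with ht | ht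
  · simp only [iterate_succ_apply', volterraMap_of_nonpos _ ht.le, sub_self, norm_zero]
    positivity
  set δ : ℕ → ℝ → ℝ := fun n s => |rate (Φ^[n] X s) - rate (Φ^[n] Y s)|
  have hδ_nonneg : ∀ n s, 0 ≤ δ n s := fun _ _ => abs_nonneg _
  have hnorm : ∀ n t, ‖Φ^[n + 1] X t - Φ^[n + 1] Y t‖ ≤ lam * ∫ s in Ioc 0 t, δ n s :=
    fun n t => by
      simp only [iterate_succ_apply']
      exact norm_volterraMap_sub_le hlam hFc hFc_mem
        (measurable_iterate_volterraMap hF0c hFc hX n)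
        (measurable_iterate_volterraMap hF0c hFc hY n) t
  have hδ : ∀ n t, 0 ≤ t → δ n t ≤ 1 * (2 * lam * t) ^ n / n.factorial := by
    intro n
    induction n with
    | zero =>
      intro t _
      simpa [δ] using abs_sub_le_of_nonneg_of_le (rate_nonneg _) (rate_le_one (X t))
        (rate_nonneg _) (rate_le_one (Y t))
    | succ n ih =>
      intro t ht
      calc δ (n + 1) t ≤ 2 * ‖Φ^[n + 1] X t - Φ^[n + 1] Y t‖ := abs_rate_sub_rate_le _ _
        _ ≤ 2 * lam * ∫ s in Ioc 0 t, δ n s := by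
          rw [mul_assoc]; exact mul_le_mul_of_nonneg_left (hnorm n t) zero_le_two
        _ ≤ 1 * (2 * lam * t) ^ (n + 1) / (n + 1).factorial :=
          mul_integral_le_pow_div_factorial (by positivity) ht (fun s _ => hδ_nonneg n s)
            fun s hs => ih s hs.1.le
  calc ‖Φ^[n + 1] X t - Φ^[n + 1] Y t‖ ≤ lam * ∫ s in Ioc 0 t, δ n s := hnorm n t
    _ ≤ 2 * lam * ∫ s in Ioc 0 t, δ n s := by
      have : 0 ≤ lam * ∫ s in Ioc 0 t, δ n s :=
        mul_nonneg hlam (setIntegral_nonneg measurableSet_Ioc fun s _ => hδ_nonneg n s)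
      linarith
    _ ≤ 1 * (2 * lam * t) ^ (n + 1) / (n + 1).factorial :=
      mul_integral_le_pow_div_factorial (by positivity) ht (fun s _ => hδ_nonneg n s)
        fun s hs => hδ n s hs.1.le
    _ = _ := by rw [one_mul, abs_of_nonneg ht]

lemma cauchySeq_iterate_volterraMap (hlam : 0 ≤ lam) (hF0c : Measurable F0c)
    (hFc : Measurable Fc) (hFc_mem : ∀ t, 0 ≤ t → Fc t ∈ Icc (0:ℝ) 1) {X : ℝ → ℝ × ℝ}
    (hX : Measurable X) (t : ℝ) : CauchySeq fun n => Φ^[n] X t := by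
  refine (cauchySeq_shift 1).1 (cauchySeq_of_dist_le_of_summable
    (fun n => (2 * lam * |t|) ^ (n + 1) / (n + 1).factorial) (fun n => ?_)
    ((summable_nat_add_iff 1).2 (Real.summable_pow_div_factorial (2 * lam * |t|))))
  rw [dist_comm, dist_eq_norm]
  show ‖Φ^[n + 1] (Φ X) t - Φ^[n + 1] X t‖ ≤ _
  exact norm_iterate_volterraMap_sub_le hlam hF0c hFc hFc_mem
    (measurable_volterraMap hF0c hFc hX) hX n t

lemma tendsto_volterraMap (hFc : Measurable Fc) (hFc_mem : ∀ t, 0 ≤ t → Fc t ∈ Icc (0:ℝ) 1)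
    {Z : ℕ → ℝ → ℝ × ℝ} {X : ℝ → ℝ × ℝ} (hZ : ∀ n, Measurable (Z n))
    (hlim : ∀ s, Tendsto (fun n => Z n s) atTop (𝓝 (X s))) (t : ℝ) :
    Tendsto (fun n => Φ (Z n) t) atTop (𝓝 (Φ X t)) := by
  have hrate : ∀ s, Tendsto (fun n => rate (Z n s)) atTop (𝓝 (rate (X s))) :=
    fun s => (continuous_rate.tendsto _).comp (hlim s)
  have hrm : ∀ n, Measurable fun s => rate (Z n s) := fun n => measurable_rate.comp (hZ n)
  have h₁ : Tendsto (fun n => ∫ s in Ioc 0 t, rate (Z n s)) atTop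
      (𝓝 (∫ s in Ioc 0 t, rate (X s))) :=
    tendsto_integral_of_dominated_convergence (fun _ => 1)
      (fun n => (hrm n).aestronglyMeasurable) (integrableOn_const measure_Ioc_lt_top.ne)
      (fun n => ae_of_all _ fun s => abs_rate_le_one _) (ae_of_all _ hrate)
  have h₂ : Tendsto (fun n => ∫ s in Ioc 0 t, Fc (t - s) * rate (Z n s)) atTop
      (𝓝 (∫ s in Ioc 0 t, Fc (t - s) * rate (X s))) :=
    tendsto_integral_of_dominated_convergence (fun _ => 1)
      (fun n => ((hFc.comp (measurable_const.sub measurable_id)).mul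
        (hrm n)).aestronglyMeasurable)
      (integrableOn_const measure_Ioc_lt_top.ne)
      (fun n => (ae_restrict_iff' measurableSet_Ioc).2 (ae_of_all _ fun s hs =>
        (abs_mul_le_abs_of_mem_Icc (hFc_mem _ (sub_nonneg.2 hs.2))).trans (abs_rate_le_one _)))
      (ae_of_all _ fun s => (hrate s).const_mul _)
  exact (tendsto_const_nhds.sub (h₁.const_mul lam)).prodMk_nhds
    (tendsto_const_nhds.add (h₂.const_mul lam))

lemma exists_measurable_volterraMap_eq_self (hlam : 0 ≤ lam) (hF0c : Measurable F0c)
    (hFc : Measurable Fc) (hFc_mem : ∀ t, 0 ≤ t → Fc t ∈ Icc (0:ℝ) 1) :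
    ∃ X : ℝ → ℝ × ℝ, Measurable X ∧ Φ X = X := by
  have hP : ∀ n, Measurable (Φ^[n] 0) :=
    measurable_iterate_volterraMap hF0c hFc measurable_const
  choose X hX using fun t =>
    cauchySeq_tendsto_of_complete (cauchySeq_iterate_volterraMap hlam hF0c hFc hFc_mem
      (measurable_const (a := (0 : ℝ × ℝ))) t)
  refine ⟨X, measurable_of_tendsto_metrizable hP (tendsto_pi_nhds.2 hX), funext fun t => ?_⟩
  have hΦ : Tendsto (fun n => Φ^[n + 1] 0 t) atTop (𝓝 (Φ X t)) := by
    simp only [iterate_succ_apply']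
    exact tendsto_volterraMap hFc hFc_mem hP hX t
  exact tendsto_nhds_unique hΦ ((hX t).comp (tendsto_add_atTop_nat 1))

lemma eq_of_volterraMap_eq_self (hlam : 0 ≤ lam) (hF0c : Measurable F0c)
    (hFc : Measurable Fc) (hFc_mem : ∀ t, 0 ≤ t → Fc t ∈ Icc (0:ℝ) 1) {X Y : ℝ → ℝ × ℝ}
    (hXm : Measurable X) (hYm : Measurable Y) (hX : ∀ t, 0 ≤ t → Φ X t = X t)
    (hY : ∀ t, 0 ≤ t → Φ Y t = Y t) {t : ℝ} (ht : 0 ≤ t) : X t = Y t := by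
  have hiter : ∀ {Z : ℝ → ℝ × ℝ}, (∀ t, 0 ≤ t → Φ Z t = Z t) →
      ∀ n, ∀ t, 0 ≤ t → Φ^[n] Z t = Z t := by
    intro Z hZ n
    induction n with
    | zero => exact fun _ _ => rfl
    | succ n ih =>
      intro t ht
      rw [iterate_succ_apply', volterraMap_congr fun s hs => ih s hs.le, hZ t ht]
  have hbound : ∀ n, ‖X t - Y t‖ ≤ (2 * lam * |t|) ^ (n + 1) / (n + 1).factorial := by
    intro n
    rw [← hiter hX (n + 1) t ht, ← hiter hY (n + 1) t ht]
    exact norm_iterate_volterraMap_sub_le hlam hF0c hFc hFc_mem hXm hYm n t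
  have hlim := (FloorSemiring.tendsto_pow_div_factorial_atTop (2 * lam * |t|)).comp
    (tendsto_add_atTop_nat 1)
  exact sub_eq_zero.1 (norm_le_zero_iff.1 (ge_of_tendsto' hlim hbound))

lemma volterraMap_fst_le (hlam : 0 ≤ lam) (X : ℝ → ℝ × ℝ) (t : ℝ) : (Φ X t).1 ≤ S0 :=
  sub_le_self _
    (mul_nonneg hlam (setIntegral_nonneg measurableSet_Ioc fun _ _ => rate_nonneg _))

lemma volterraMap_snd_nonneg (hlam : 0 ≤ lam) (hI0 : 0 ≤ I0)
    (hF0c_mem : ∀ t, 0 ≤ t → F0c t ∈ Icc (0:ℝ) 1) (hFc_mem : ∀ t, 0 ≤ t → Fc t ∈ Icc (0:ℝ) 1)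
    (X : ℝ → ℝ × ℝ) {t : ℝ} (ht : 0 ≤ t) : 0 ≤ (Φ X t).2 :=
  add_nonneg (mul_nonneg hI0 (hF0c_mem t ht).1) (mul_nonneg hlam (setIntegral_nonneg
    measurableSet_Ioc fun _ hs => mul_nonneg (hFc_mem _ (sub_nonneg.2 hs.2)).1 (rate_nonneg _)))

lemma volterraMap_fst_add_snd_le (hlam : 0 ≤ lam) (hI0 : 0 ≤ I0)
    (hF0c_mem : ∀ t, 0 ≤ t → F0c t ∈ Icc (0:ℝ) 1) (hFc : Measurable Fc)
    (hFc_mem : ∀ t, 0 ≤ t → Fc t ∈ Icc (0:ℝ) 1) {X : ℝ → ℝ × ℝ} (hX : Measurable X)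
    {t : ℝ} (ht : 0 ≤ t) : (Φ X t).1 + (Φ X t).2 ≤ S0 + I0 := by
  have hr : Measurable fun s => rate (X s) := measurable_rate.comp hX
  have hK : ∀ s ∈ Ioc 0 t, Fc (t - s) ∈ Icc (0:ℝ) 1 := fun s hs =>
    hFc_mem _ (sub_nonneg.2 hs.2)
  have hmono : ∫ s in Ioc 0 t, Fc (t - s) * rate (X s) ≤ ∫ s in Ioc 0 t, rate (X s) :=
    setIntegral_mono_on
      (integrableOn_Ioc_of_abs_le ((hFc.comp (measurable_const.sub measurable_id)).mul hr)
        fun s hs => (abs_mul_le_abs_of_mem_Icc (hK s hs)).trans (abs_rate_le_one _))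
      (integrableOn_Ioc_of_abs_le hr fun s _ => abs_rate_le_one _) measurableSet_Ioc
      fun s hs => mul_le_of_le_one_left (rate_nonneg _) (hK s hs).2
  have hI : I0 * F0c t ≤ I0 := mul_le_of_le_one_right hI0 (hF0c_mem t ht).2
  simp only [volterraMap]
  nlinarith [mul_le_mul_of_nonneg_left hmono hlam]

lemma nonneg_of_eq_sub_integral {S r : ℝ → ℝ} {c k : ℝ} (hc : 0 ≤ c) (hk : 0 ≤ k)
    (hr : ∀ a b, IntervalIntegrable r volume a b) (hr_nonneg : ∀ s, 0 ≤ r s)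
    (hr_zero : ∀ s, 0 ≤ s → S s ≤ 0 → r s = 0)
    (hS : ∀ t, 0 ≤ t → S t = c - k * ∫ s in 0..t, r s) {t : ℝ} (ht : 0 ≤ t) : 0 ≤ S t := by
  set G : ℝ → ℝ := fun t => c - k * ∫ s in 0..t, r s
  have hG_cont : Continuous G :=
    continuous_const.sub (continuous_const.mul (intervalIntegral.continuous_primitive hr 0))
  have hG_sub : ∀ a b, G b = G a - k * ∫ s in a..b, r s := fun a b => by
    simp only [G, ← intervalIntegral.integral_add_adjacent_intervals (hr 0 a) (hr a b)]
    ring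
  have hG_anti : ∀ a b, a ≤ b → G b ≤ G a := fun a b hab => by
    rw [hG_sub a b]
    exact sub_le_self _
      (mul_nonneg hk (intervalIntegral.integral_nonneg hab fun s _ => hr_nonneg s))
  by_contra! hneg
  rw [hS t ht] at hneg
  obtain ⟨τ, ⟨hτ, hτt⟩, hGτ⟩ : ∃ τ ∈ Icc 0 t, G τ = 0 :=
    intermediate_value_Icc' ht hG_cont.continuousOn ⟨hneg.le, by simpa [G] using hc⟩
  -- `S ≤ 0` after the zero `τ`, so the rate vanishes there and `S t = S τ = 0`
  have hfrozen : ∫ s in τ..t, r s = 0 := by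
    rw [intervalIntegral.integral_congr (g := fun _ => 0) fun s hs => ?_,
      intervalIntegral.integral_zero]
    rw [uIcc_of_le hτt] at hs
    refine hr_zero s (hτ.trans hs.1) ?_
    rw [hS s (hτ.trans hs.1)]
    exact (hG_anti τ s hs.1).trans hGτ.le
  have := hG_sub τ t
  rw [hfrozen, hGτ, mul_zero, sub_zero] at this
  exact hneg.ne this

lemma mem_Icc_of_volterraMap_eq_self (hlam : 0 ≤ lam) (hS0 : S0 ∈ Icc (0:ℝ) 1)
    (hI0 : I0 ∈ Icc (0:ℝ) 1) (hsum : S0 + I0 ≤ 1)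
    (hF0c_mem : ∀ t, 0 ≤ t → F0c t ∈ Icc (0:ℝ) 1) (hFc : Measurable Fc)
    (hFc_mem : ∀ t, 0 ≤ t → Fc t ∈ Icc (0:ℝ) 1) {X : ℝ → ℝ × ℝ} (hXm : Measurable X)
    (hX : ∀ t, 0 ≤ t → Φ X t = X t) {t : ℝ} (ht : 0 ≤ t) :
    (X t).1 ∈ Icc (0:ℝ) 1 ∧ (X t).2 ∈ Icc (0:ℝ) 1 := by
  have hr : Measurable fun s => rate (X s) := measurable_rate.comp hXm
  have hS_nonneg : 0 ≤ (X t).1 :=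
    nonneg_of_eq_sub_integral (S := fun s => (X s).1) (r := fun s => rate (X s)) hS0.1 hlam
      (fun a b => intervalIntegrable_iff.2
        (integrableOn_Ioc_of_abs_le hr fun s _ => abs_rate_le_one _))
      (fun s => rate_nonneg (X s)) (fun s _ hs => rate_eq_zero_of_fst_nonpos hs)
      (fun t ht => by
        rw [intervalIntegral.integral_of_le ht]; exact (congrArg Prod.fst (hX t ht)).symm) ht
  have hS_le : (Φ X t).1 ≤ S0 := volterraMap_fst_le hlam X t
  have hI_nonneg : 0 ≤ (Φ X t).2 :=
    volterraMap_snd_nonneg hlam hI0.1 hF0c_mem hFc_mem X ht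
  have hsum_le : (Φ X t).1 + (Φ X t).2 ≤ S0 + I0 :=
    volterraMap_fst_add_snd_le hlam hI0.1 hF0c_mem hFc hFc_mem hXm ht
  rw [hX t ht] at hS_le hI_nonneg hsum_le
  exact ⟨⟨hS_nonneg, hS_le.trans hS0.2⟩, ⟨hI_nonneg, by linarith⟩⟩

lemma volterraMap_apply_of_mem_Icc {X : ℝ → ℝ × ℝ}
    (hX : ∀ s, 0 ≤ s → (X s).1 ∈ Icc (0:ℝ) 1 ∧ (X s).2 ∈ Icc (0:ℝ) 1) {t : ℝ} (ht : 0 ≤ t) :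
    Φ X t = (S0 - lam * ∫ s in (0:ℝ)..t, (X s).1 * (X s).2,
      I0 * F0c t + lam * ∫ s in (0:ℝ)..t, Fc (t - s) * ((X s).1 * (X s).2)) := by
  have hr : ∀ s ∈ Ioc 0 t, rate (X s) = (X s).1 * (X s).2 := fun s hs =>
    rate_eq_mul (hX s hs.1.le).1 (hX s hs.1.le).2
  simp only [volterraMap, intervalIntegral.integral_of_le ht,
    setIntegral_congr_fun measurableSet_Ioc hr,
    setIntegral_congr_fun measurableSet_Ioc fun s hs => congrArg (Fc (t - s) * ·) (hr s hs)]

lemma volterraMap_eq_self_of_solution {S I : ℝ → ℝ}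
    (hmem : ∀ t, 0 ≤ t → S t ∈ Icc (0:ℝ) 1 ∧ I t ∈ Icc (0:ℝ) 1)
    (hS : ∀ t, 0 ≤ t → S t = S0 - lam * ∫ s in (0:ℝ)..t, S s * I s)
    (hI : ∀ t, 0 ≤ t → I t = I0 * F0c t + lam * ∫ s in (0:ℝ)..t, Fc (t - s) * (S s * I s))
    {t : ℝ} (ht : 0 ≤ t) : Φ (fun t => (S t, I t)) t = (S t, I t) := by
  rw [volterraMap_apply_of_mem_Icc hmem ht, ← hS t ht, ← hI t ht]

end VolterraMap

end VolterraSIR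

open VolterraSIR in
theorem volterra_sir_existence_uniqueness_general
    (lam : ℝ) (hlam : 0 < lam)
    (F0c Fc : ℝ → ℝ)
    (hF0c_meas : Measurable F0c) (hFc_meas : Measurable Fc)
    (hF0c_mem : ∀ t, 0 ≤ t → F0c t ∈ Set.Icc (0:ℝ) 1)
    (hFc_mem : ∀ t, 0 ≤ t → Fc t ∈ Set.Icc (0:ℝ) 1)
    (S0 I0 : ℝ) (hS0 : S0 ∈ Set.Icc (0:ℝ) 1) (hI0 : I0 ∈ Set.Icc (0:ℝ) 1)
    (hsum : S0 + I0 ≤ 1) :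
    (∃ S I : ℝ → ℝ,
      Measurable S ∧ Measurable I
      ∧ (∀ t, 0 ≤ t → S t ∈ Set.Icc (0:ℝ) 1 ∧ I t ∈ Set.Icc (0:ℝ) 1)
      ∧ (∀ t, 0 ≤ t →
          S t = S0 - lam * ∫ s in (0:ℝ)..t, S s * I s)
      ∧ (∀ t, 0 ≤ t →
          I t = I0 * F0c t + lam * ∫ s in (0:ℝ)..t, Fc (t - s) * (S s * I s)))
    ∧ (∀ S₁ I₁ S₂ I₂ : ℝ → ℝ,
        Measurable S₁ → Measurable I₁ → Measurable S₂ → Measurable I₂ →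
        (∀ t, 0 ≤ t → S₁ t ∈ Set.Icc (0:ℝ) 1 ∧ I₁ t ∈ Set.Icc (0:ℝ) 1) →
        (∀ t, 0 ≤ t → S₂ t ∈ Set.Icc (0:ℝ) 1 ∧ I₂ t ∈ Set.Icc (0:ℝ) 1) →
        (∀ t, 0 ≤ t → S₁ t = S0 - lam * ∫ s in (0:ℝ)..t, S₁ s * I₁ s) →
        (∀ t, 0 ≤ t → I₁ t = I0 * F0c t + lam * ∫ s in (0:ℝ)..t, Fc (t - s) * (S₁ s * I₁ s)) →
        (∀ t, 0 ≤ t → S₂ t = S0 - lam * ∫ s in (0:ℝ)..t, S₂ s * I₂ s) →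
        (∀ t, 0 ≤ t → I₂ t = I0 * F0c t + lam * ∫ s in (0:ℝ)..t, Fc (t - s) * (S₂ s * I₂ s)) →
        ∀ t, 0 ≤ t → S₁ t = S₂ t ∧ I₁ t = I₂ t) := by
  constructor
  · obtain ⟨X, hXm, hX⟩ := exists_measurable_volterraMap_eq_self (S0 := S0) (I0 := I0)
      hlam.le hF0c_meas hFc_meas hFc_mem
    have hmem : ∀ t, 0 ≤ t → (X t).1 ∈ Icc (0:ℝ) 1 ∧ (X t).2 ∈ Icc (0:ℝ) 1 := fun _ ht =>
      mem_Icc_of_volterraMap_eq_self hlam.le hS0 hI0 hsum hF0c_mem hFc_meas hFc_mem hXm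
        (fun t _ => congrFun hX t) ht
    have hsol : ∀ t, 0 ≤ t → X t = _ := fun t ht =>
      (congrFun hX t).symm.trans (volterraMap_apply_of_mem_Icc hmem ht)
    exact ⟨fun t => (X t).1, fun t => (X t).2, hXm.fst, hXm.snd, hmem,
      fun t ht => congrArg Prod.fst (hsol t ht), fun t ht => congrArg Prod.snd (hsol t ht)⟩
  · intro S₁ I₁ S₂ I₂ hS₁ hI₁ hS₂ hI₂ hmem₁ hmem₂ hSeq₁ hIeq₁ hSeq₂ hIeq₂ t ht
    exact Prod.mk.inj (eq_of_volterraMap_eq_self hlam.le hF0c_meas hFc_meas hFc_mem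
      (hS₁.prodMk hI₁) (hS₂.prodMk hI₂)
      (fun _ ht => volterraMap_eq_self_of_solution hmem₁ hSeq₁ hIeq₁ ht)
      (fun _ ht => volterraMap_eq_self_of_solution hmem₂ hSeq₂ hIeq₂ ht) ht)

/-- The Volterra integral system
`S̄(t) = S̄(0) - λ∫₀ᵗ S̄ Ī ds`, `Ī(t) = Ī(0)F₀ᶜ(t) + λ∫₀ᵗ Fᶜ(t-s) S̄(s)Ī(s) ds`
has a solution with values in `[0,1]²` on `[0,∞)`, and any two such solutions agree
on `[0,∞)`. -/
theorem volterra_sir_existence_uniqueness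
    (lam : ℝ) (hlam : 0 < lam)
    (F0c Fc : ℝ → ℝ)
    (hF0c_meas : Measurable F0c) (hFc_meas : Measurable Fc)
    (hF0c_anti : AntitoneOn F0c (Set.Ici 0)) (hFc_anti : AntitoneOn Fc (Set.Ici 0))
    (hF0c_mem : ∀ t, 0 ≤ t → F0c t ∈ Set.Icc (0:ℝ) 1)
    (hFc_mem : ∀ t, 0 ≤ t → Fc t ∈ Set.Icc (0:ℝ) 1)
    (hF0c_rc : ∀ t, 0 ≤ t → ContinuousWithinAt F0c (Set.Ici t) t)
    (hFc_rc : ∀ t, 0 ≤ t → ContinuousWithinAt Fc (Set.Ici t) t)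
    (S0 I0 : ℝ) (hS0 : S0 ∈ Set.Icc (0:ℝ) 1) (hI0 : I0 ∈ Set.Icc (0:ℝ) 1)
    (hsum : S0 + I0 ≤ 1) :
    (∃ S I : ℝ → ℝ,
      Measurable S ∧ Measurable I
      ∧ (∀ t, 0 ≤ t → S t ∈ Set.Icc (0:ℝ) 1 ∧ I t ∈ Set.Icc (0:ℝ) 1)
      ∧ (∀ t, 0 ≤ t →
          S t = S0 - lam * ∫ s in (0:ℝ)..t, S s * I s)
      ∧ (∀ t, 0 ≤ t →
          I t = I0 * F0c t + lam * ∫ s in (0:ℝ)..t, Fc (t - s) * (S s * I s)))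
    ∧ (∀ S₁ I₁ S₂ I₂ : ℝ → ℝ,
        Measurable S₁ → Measurable I₁ → Measurable S₂ → Measurable I₂ →
        (∀ t, 0 ≤ t → S₁ t ∈ Set.Icc (0:ℝ) 1 ∧ I₁ t ∈ Set.Icc (0:ℝ) 1) →
        (∀ t, 0 ≤ t → S₂ t ∈ Set.Icc (0:ℝ) 1 ∧ I₂ t ∈ Set.Icc (0:ℝ) 1) →
        (∀ t, 0 ≤ t → S₁ t = S0 - lam * ∫ s in (0:ℝ)..t, S₁ s * I₁ s) →
        (∀ t, 0 ≤ t → I₁ t = I0 * F0c t + lam * ∫ s in (0:ℝ)..t, Fc (t - s) * (S₁ s * I₁ s)) →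
        (∀ t, 0 ≤ t → S₂ t = S0 - lam * ∫ s in (0:ℝ)..t, S₂ s * I₂ s) →
        (∀ t, 0 ≤ t → I₂ t = I0 * F0c t + lam * ∫ s in (0:ℝ)..t, Fc (t - s) * (S₂ s * I₂ s)) →
        ∀ t, 0 ≤ t → S₁ t = S₂ t ∧ I₁ t = I₂ t) :=
  volterra_sir_existence_uniqueness_general lam hlam F0c Fc hF0c_meas hFc_meas hF0c_mem hFc_mem S0
    I0 hS0 hI0 hsum
end

section
/- Let R₀ = ∫₀^∞ λ̄(t) dt > 1, let ρ > 0 satisfy ∫₀^∞ λ̄(t) e^{-ρt} dt = 1, and define λ̄_ρ(t) = (∫₀^∞ λ̄(t+s) e^{-ρs} ds)/(∫₀^∞ F^c(s) e^{-ρs} ds), F_ρ^c(t) = (∫₀^∞ F^c(t+s) e^{-ρs} ds)/(∫₀^∞ F^c(s) e^{-ρs} ds), and 𝐢 = ∫₀^∞ F^c(s) ρ e^{-ρs} ds. Then the functions 𝔉(t) = ρ e^{ρt}, I(t) = 𝐢 e^{ρt} satisfy the linear system 𝔉(t) = I(0) λ̄_ρ(t) + ∫₀ᵗ λ̄(t-s)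 𝔉(s) ds and I(t) = I(0) F_ρ^c(t) + ∫₀ᵗ F^c(t-s) 𝔉(s) ds, where I(0) = 𝐢. -/
/-!
Multiplying `∫₀^∞ f(u) e^{-ρu} du` by `e^{ρt}` and splitting the integral at `t` gives the tail
`∫₀^∞ f(t+s) e^{-ρs} ds` plus the convolution `∫₀ᵗ f(t-s) e^{ρs} ds`. For `f = λ̄` the left side
is `e^{ρt}` because `ρ` is the Malthusian exponent; for `f = Fᶜ` it is `D e^{ρt}`, and `𝐢 = ρ D`.
Multiplying both identities by `ρ` yields the two equations of the linear system.
-/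

open MeasureTheory Set Real

theorem setIntegral_Ioi_zero_comp_add_left (g : ℝ → ℝ) (t : ℝ) :
    ∫ s in Ioi 0, g (t + s) = ∫ u in Ioi t, g u := by
  have hpre : (t + ·) ⁻¹' Ioi t = Ioi 0 := by ext s; simp
  rw [← hpre, (measurePreserving_add_left volume t).setIntegral_preimage_emb
    (Homeomorph.addLeft t).isClosedEmbedding.measurableEmbedding]

section ExpTilt

variable (f : ℝ → ℝ) (ρ t : ℝ)

theorem setIntegral_Ioi_comp_add_mul_exp :
    ∫ s in Ioi 0, f (t + s) * exp (-ρ * s) = exp (ρ * t) * ∫ u in Ioi t, f u * exp (-ρ * u) := by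
  rw [← setIntegral_Ioi_zero_comp_add_left (fun u ↦ f u * exp (-ρ * u)), ← integral_const_mul]
  refine integral_congr_ae (.of_forall fun s ↦ ?_)
  dsimp only
  rw [mul_left_comm, ← exp_add]
  ring_nf

theorem intervalIntegral_comp_sub_mul_exp :
    ∫ s in 0..t, f (t - s) * exp (ρ * s) = exp (ρ * t) * ∫ u in 0..t, f u * exp (-ρ * u) := by
  have h := intervalIntegral.integral_comp_sub_left (a := 0) (b := t)
    (fun u ↦ exp (ρ * t) * (f u * exp (-ρ * u))) t
  rw [sub_self, sub_zero] at h
  rw [← intervalIntegral.integral_const_mul, ← h]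
  refine intervalIntegral.integral_congr fun s _ ↦ ?_
  rw [mul_left_comm, ← exp_add]
  ring_nf

theorem exp_mul_setIntegral_Ioi_mul_exp (hf : IntegrableOn (fun u ↦ f u * exp (-ρ * u)) (Ioi 0))
    (ht : 0 ≤ t) :
    exp (ρ * t) * ∫ u in Ioi 0, f u * exp (-ρ * u)
      = (∫ s in Ioi 0, f (t + s) * exp (-ρ * s)) + ∫ s in 0..t, f (t - s) * exp (ρ * s) := by
  rw [setIntegral_Ioi_comp_add_mul_exp, intervalIntegral_comp_sub_mul_exp,
    ← intervalIntegral.integral_interval_add_Ioi hf (hf.mono_set (Ioi_subset_Ioi ht))]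
  ring

end ExpTilt

theorem exponential_solution_early_phase_general
    (lamb Fc : ℝ → ℝ)
    (rho : ℝ)
    (hrhoint : IntegrableOn (fun t => lamb t * Real.exp (-rho * t)) (Set.Ioi 0))
    (hrho : ∫ t in Set.Ioi (0:ℝ), lamb t * Real.exp (-rho * t) = 1)
    (hFc_int : ∀ t, 0 ≤ t →
      IntegrableOn (fun s => Fc (t + s) * Real.exp (-rho * s)) (Set.Ioi 0))
    (D i : ℝ)
    (hD : D = ∫ s in Set.Ioi (0:ℝ), Fc s * Real.exp (-rho * s)) (hDpos : 0 < D)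
    (hi : i = ∫ s in Set.Ioi (0:ℝ), Fc s * (rho * Real.exp (-rho * s)))
    (lambRho FcRho : ℝ → ℝ)
    (hlambRho : ∀ t, lambRho t = (∫ s in Set.Ioi (0:ℝ), lamb (t + s) * Real.exp (-rho * s)) / D)
    (hFcRho : ∀ t, FcRho t = (∫ s in Set.Ioi (0:ℝ), Fc (t + s) * Real.exp (-rho * s)) / D) :
    ∀ t, 0 ≤ t →
      (rho * Real.exp (rho * t)
        = i * lambRho t + ∫ s in (0:ℝ)..t, lamb (t - s) * (rho * Real.exp (rho * s)))
      ∧ (i * Real.exp (rho * t)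
        = i * FcRho t + ∫ s in (0:ℝ)..t, Fc (t - s) * (rho * Real.exp (rho * s))) := by
  intro t ht
  have hiD : i = rho * D := by
    rw [hi, hD, ← integral_const_mul]
    simp_rw [mul_left_comm]
  have hconv (f : ℝ → ℝ) : ∫ s in (0:ℝ)..t, f (t - s) * (rho * exp (rho * s))
      = rho * ∫ s in (0:ℝ)..t, f (t - s) * exp (rho * s) := by
    simp_rw [mul_left_comm _ rho]
    exact intervalIntegral.integral_const_mul _ _
  have hlamb := exp_mul_setIntegral_Ioi_mul_exp lamb rho t hrhoint ht
  have hFc := exp_mul_setIntegral_Ioi_mul_exp Fc rho t (by simpa using hFc_int 0 le_rfl) ht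
  rw [hrho, mul_one] at hlamb
  rw [← hD, mul_comm] at hFc
  constructor
  · rw [hlambRho, hiD, hconv, hlamb]
    field_simp
  · rw [hFcRho, hiD, hconv, mul_assoc, hFc]
    field_simp

/-- If `R₀ > 1` and `ρ > 0` satisfies `∫₀^∞ λ̄(t)e^{-ρt} dt = 1`, then the exponential
functions `𝔉(t) = ρe^{ρt}` and `I(t) = 𝐢 e^{ρt}` solve the linear early-phase system
with the `ρ`-tilted initial data `λ̄_ρ` and `F_ρᶜ`, where `𝐢 = ∫₀^∞ Fᶜ(s) ρ e^{-ρs} ds`. -/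
theorem exponential_solution_early_phase
    (lamb Fc : ℝ → ℝ)
    (hlmeas : Measurable lamb) (hlnn : ∀ t, 0 ≤ lamb t)
    (hFc_meas : Measurable Fc) (hFc_mem : ∀ t, 0 ≤ t → Fc t ∈ Set.Icc (0:ℝ) 1)
    (hFc_anti : AntitoneOn Fc (Set.Ici 0))
    (hlint : IntegrableOn lamb (Set.Ioi 0))
    (R0 : ℝ) (hR0 : R0 = ∫ t in Set.Ioi (0:ℝ), lamb t) (hR0gt : 1 < R0)
    (rho : ℝ) (hrhopos : 0 < rho)
    (hrhoint : IntegrableOn (fun t => lamb t * Real.exp (-rho * t)) (Set.Ioi 0))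
    (hrho : ∫ t in Set.Ioi (0:ℝ), lamb t * Real.exp (-rho * t) = 1)
    (hshift_int : ∀ t, 0 ≤ t →
      IntegrableOn (fun s => lamb (t + s) * Real.exp (-rho * s)) (Set.Ioi 0))
    (hFc_int : ∀ t, 0 ≤ t →
      IntegrableOn (fun s => Fc (t + s) * Real.exp (-rho * s)) (Set.Ioi 0))
    (hloc : ∀ t, 0 ≤ t →
      IntervalIntegrable (fun s => lamb (t - s) * (rho * Real.exp (rho * s))) volume 0 t)
    (D i : ℝ)
    (hD : D = ∫ s in Set.Ioi (0:ℝ), Fc s * Real.exp (-rho * s)) (hDpos : 0 < D)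
    (hi : i = ∫ s in Set.Ioi (0:ℝ), Fc s * (rho * Real.exp (-rho * s)))
    (lambRho FcRho : ℝ → ℝ)
    (hlambRho : ∀ t, lambRho t = (∫ s in Set.Ioi (0:ℝ), lamb (t + s) * Real.exp (-rho * s)) / D)
    (hFcRho : ∀ t, FcRho t = (∫ s in Set.Ioi (0:ℝ), Fc (t + s) * Real.exp (-rho * s)) / D) :
    ∀ t, 0 ≤ t →
      (rho * Real.exp (rho * t)
        = i * lambRho t + ∫ s in (0:ℝ)..t, lamb (t - s) * (rho * Real.exp (rho * s)))
      ∧ (i * Real.exp (rho * t)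
        = i * FcRho t + ∫ s in (0:ℝ)..t, Fc (t - s) * (rho * Real.exp (rho * s))) :=
  exponential_solution_early_phase_general lamb Fc rho hrhoint hrho hFc_int D i hD hDpos hi lambRho
    FcRho hlambRho hFcRho
end

section
/- The Volterra equation x(t) = (S̄(0) - ∫₀ᵗ x(s) ds)⁺ · (g₀(t) + ∫₀ᵗ λ̄(t-s) x(s) ds), where g₀ is bounded measurable nonnegative with g₀ ≤ λ* Ī(0) and λ̄: [0,∞) → [0, λ*], has a unique nonnegative locally bounded solution x, and any such solution satisfies ∫₀ᵗ x(s) ds ≤ S̄(0) and 0 ≤ x(t) ≤ λ*(Ī(0) + S̄(0)) · e^{λ* t} for all t ≥ 0 (in particular the positive part is never active: ∫₀ᵗ x(s) ds ≤ S̄(0)). -/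
/-!
Write the right-hand side as `S(t)⁺ F(t)`, with `S(t) = S̄(0) - ∫₀ᵗ x` and `F` the force of
infection. A nonnegative solution vanishes wherever `S < 0`, so `∫₀ᵗ x` can never climb above
`S̄(0)`; hence `F ≤ λ* (Ī(0) + S̄(0))`, and `x ≤ F` as `S⁺ ≤ 1`. On functions bounded by `B` on
`[0, t]` the right-hand side is Lipschitz for the distance `∫₀ᵗ |x - y|`, so iterating this
Volterra estimate bounds differences by `M (K t)ⁿ / n!`. This gives uniqueness directly, and
existence by Picard iteration, whose iterates stay below the envelope `λ* (Ī(0) + S̄(0)) e^{λ* t}`.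
-/

open MeasureTheory Set Filter Topology Real
open scoped Nat Interval

theorem intervalIntegrable_of_mem_Icc {f : ℝ → ℝ} (hf : Measurable f) {a b C : ℝ} (hab : a ≤ b)
    (h : ∀ s ∈ Icc a b, f s ∈ Icc 0 C) : IntervalIntegrable f volume a b := by
  refine (intervalIntegrable_const (c := C)).mono_fun' hf.aestronglyMeasurable.restrict ?_
  rw [uIoc_of_le hab]
  refine (ae_restrict_iff' measurableSet_Ioc).2 <| ae_of_all _ fun s hs => ?_
  obtain ⟨h₀, hC⟩ := h s (Ioc_subset_Icc_self hs)
  simpa [Real.norm_of_nonneg h₀] using hC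

theorem Measurable.intervalIntegral_prod {f : ℝ → ℝ → ℝ} (hf : Measurable (Function.uncurry f))
    (a : ℝ) : Measurable fun t => ∫ s in a..t, f t s := by
  have hslice : ∀ S : Set (ℝ × ℝ), MeasurableSet S →
      Measurable fun t => ∫ s, S.indicator (Function.uncurry f) (t, s) := fun S hS =>
    (hf.indicator hS).stronglyMeasurable.integral_prod_right'.measurable
  have hpos : MeasurableSet {p : ℝ × ℝ | p.2 ∈ Ioc a p.1} :=
    (measurableSet_lt measurable_const measurable_snd).inter
      (measurableSet_le measurable_snd measurable_fst)
  have hneg : MeasurableSet {p : ℝ × ℝ | p.2 ∈ Ioc p.1 a} :=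
    (measurableSet_lt measurable_fst measurable_snd).inter
      (measurableSet_le measurable_snd measurable_const)
  convert (hslice _ hpos).sub (hslice _ hneg) using 2 with t
  rw [intervalIntegral, ← integral_indicator measurableSet_Ioc,
    ← integral_indicator measurableSet_Ioc]
  rfl

theorem integral_le_of_eq_zero_of_lt_integral {x : ℝ → ℝ} {c t : ℝ} (ht : 0 ≤ t) (hc : 0 ≤ c)
    (hx : IntervalIntegrable x volume 0 t)
    (hzero : ∀ u ∈ Icc 0 t, c < ∫ s in 0..u, x s → x u = 0) :
    ∫ s in 0..t, x s ≤ c := by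
  set A := Icc 0 t ∩ (fun u => ∫ s in 0..u, x s) ⁻¹' Iic c
  have hcont : ContinuousOn (fun u => ∫ s in 0..u, x s) (Icc 0 t) := by
    simpa only [uIcc_of_le ht] using
      intervalIntegral.continuousOn_primitive_interval' hx left_mem_uIcc
  have hA : IsClosed A := hcont.preimage_isClosed_of_isClosed isClosed_Icc isClosed_Iic
  have hbdd : BddAbove A := bddAbove_Icc.mono inter_subset_left
  have h0 : (0 : ℝ) ∈ A := ⟨left_mem_Icc.2 ht, by simpa using hc⟩
  obtain ⟨⟨ht₀, ht₀t⟩, hle⟩ := hA.csSup_mem ⟨0, h0⟩ hbdd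
  -- after `sSup A`, the last time the primitive is `≤ c`, the integrand vanishes
  have hvanish : ∫ s in sSup A..t, x s = 0 := by
    refine intervalIntegral.integral_zero_ae (ae_of_all _ fun u hu => hzero u ?_ ?_)
    · rw [uIoc_of_le ht₀t] at hu
      exact ⟨ht₀.trans hu.1.le, hu.2⟩
    · rw [uIoc_of_le ht₀t] at hu
      by_contra hcu
      exact (le_csSup hbdd ⟨⟨ht₀.trans hu.1.le, hu.2⟩, not_lt.1 hcu⟩).not_gt hu.1
  rw [← intervalIntegral.integral_add_adjacent_intervals (hx.mono_set ?_) (hx.mono_set ?_),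
    hvanish, add_zero]
  · exact hle
  · rw [uIcc_of_le ht, uIcc_of_le ht₀]; exact Icc_subset_Icc le_rfl ht₀t
  · rw [uIcc_of_le ht, uIcc_of_le ht₀t]; exact Icc_subset_Icc ht₀ le_rfl

theorem le_pow_div_factorial_of_le_integral {d : ℕ → ℝ → ℝ} {K M t : ℝ} (hK : 0 ≤ K)
    (hd : ∀ n, ∀ s ∈ Icc 0 t, 0 ≤ d n s) (h0 : ∀ s ∈ Icc 0 t, d 0 s ≤ M)
    (hstep : ∀ n, ∀ s ∈ Icc 0 t, d (n + 1) s ≤ K * ∫ u in 0..s, d n u) :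
    ∀ n, ∀ s ∈ Icc 0 t, d n s ≤ M * (K * s) ^ n / n ! := by
  intro n
  induction n with
  | zero => simpa using h0
  | succ n ih =>
    intro s hs
    have hsub : Ioc 0 s ⊆ Icc 0 t := fun u hu => ⟨hu.1.le, hu.2.trans hs.2⟩
    have hint : ∫ u in 0..s, d n u ≤ ∫ u in 0..s, M * K ^ n / n ! * u ^ n := by
      rw [intervalIntegral.integral_of_le hs.1, intervalIntegral.integral_of_le hs.1]
      refine setIntegral_mono_of_nonneg (fun u hu => hd n u (hsub hu)) (fun u hu => ?_)
        (Continuous.integrableOn_Ioc (by fun_prop))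
      calc d n u ≤ M * (K * u) ^ n / n ! := ih u (hsub hu)
        _ = M * K ^ n / n ! * u ^ n := by ring
    calc d (n + 1) s ≤ K * ∫ u in 0..s, d n u := hstep n s hs
      _ ≤ K * ∫ u in 0..s, M * K ^ n / n ! * u ^ n := mul_le_mul_of_nonneg_left hint hK
      _ = M * (K * s) ^ (n + 1) / (n + 1)! := by
        rw [intervalIntegral.integral_const_mul, integral_pow, Nat.factorial_succ]
        push_cast
        field_simp
        ring

noncomputable def susceptible (S0 : ℝ) (x : ℝ → ℝ) (t : ℝ) : ℝ :=
  max (S0 - ∫ s in 0..t, x s) 0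

noncomputable def forceOfInfection (g0 lamb x : ℝ → ℝ) (t : ℝ) : ℝ :=
  g0 t + ∫ s in 0..t, lamb (t - s) * x s

noncomputable def volterraRHS (S0 : ℝ) (g0 lamb x : ℝ → ℝ) (t : ℝ) : ℝ :=
  susceptible S0 x t * forceOfInfection g0 lamb x t

variable {S0 G L t : ℝ} {g0 lamb x y : ℝ → ℝ}

theorem susceptible_le_one (hS1 : S0 ≤ 1) (ht : 0 ≤ t) (hx : ∀ s ∈ Icc 0 t, 0 ≤ x s) :
    susceptible S0 x t ≤ 1 :=
  max_le (by linarith [intervalIntegral.integral_nonneg (μ := volume) ht hx]) zero_le_one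

theorem abs_susceptible_sub_le (ht : 0 ≤ t) (hx : IntervalIntegrable x volume 0 t)
    (hy : IntervalIntegrable y volume 0 t) :
    |susceptible S0 x t - susceptible S0 y t| ≤ ∫ s in 0..t, |x s - y s| :=
  calc |susceptible S0 x t - susceptible S0 y t|
      ≤ |(S0 - ∫ s in 0..t, x s) - (S0 - ∫ s in 0..t, y s)| := abs_max_sub_max_le_abs _ _ _
    _ = |∫ s in 0..t, (x s - y s)| := by
      rw [sub_sub_sub_cancel_left, abs_sub_comm, intervalIntegral.integral_sub hx hy]
    _ ≤ ∫ s in 0..t, |x s - y s| := intervalIntegral.abs_integral_le_integral_abs ht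

theorem abs_integral_kernel_mul_le (hl : ∀ s, 0 ≤ s → lamb s ∈ Icc 0 L) (ht : 0 ≤ t)
    (hx : IntervalIntegrable x volume 0 t) :
    |∫ s in 0..t, lamb (t - s) * x s| ≤ L * ∫ s in 0..t, |x s| :=
  calc |∫ s in 0..t, lamb (t - s) * x s| ≤ ∫ s in 0..t, |lamb (t - s) * x s| :=
        intervalIntegral.abs_integral_le_integral_abs ht
    _ ≤ ∫ s in 0..t, L * |x s| := by
      rw [intervalIntegral.integral_of_le ht, intervalIntegral.integral_of_le ht]
      refine setIntegral_mono_of_nonneg (fun _ _ => abs_nonneg _) (fun s hs => ?_)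
        (hx.abs.const_mul L).1
      have hls := hl (t - s) (by linarith [hs.2])
      rw [abs_mul, abs_of_nonneg hls.1]
      exact mul_le_mul_of_nonneg_right hls.2 (abs_nonneg _)
    _ = L * ∫ s in 0..t, |x s| := intervalIntegral.integral_const_mul _ _

theorem forceOfInfection_nonneg (hg : ∀ t, 0 ≤ t → g0 t ∈ Icc 0 G)
    (hl : ∀ s, 0 ≤ s → lamb s ∈ Icc 0 L) (ht : 0 ≤ t) (hx : ∀ s ∈ Icc 0 t, 0 ≤ x s) :
    0 ≤ forceOfInfection g0 lamb x t :=
  add_nonneg (hg t ht).1 <| intervalIntegral.integral_nonneg ht fun s hs =>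
    mul_nonneg (hl (t - s) (by linarith [hs.2])).1 (hx s hs)

theorem forceOfInfection_le (hg : ∀ t, 0 ≤ t → g0 t ∈ Icc 0 G)
    (hl : ∀ s, 0 ≤ s → lamb s ∈ Icc 0 L) (ht : 0 ≤ t) (hx₀ : ∀ s ∈ Icc 0 t, 0 ≤ x s)
    (hx : IntervalIntegrable x volume 0 t) :
    forceOfInfection g0 lamb x t ≤ G + L * ∫ s in 0..t, x s := by
  have habs : ∫ s in 0..t, |x s| = ∫ s in 0..t, x s :=
    intervalIntegral.integral_congr fun s hs =>
      abs_of_nonneg (hx₀ s (by rwa [uIcc_of_le ht] at hs))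
  refine add_le_add (hg t ht).2 ?_
  rw [← habs]
  exact (le_abs_self _).trans (abs_integral_kernel_mul_le hl ht hx)

theorem intervalIntegrable_kernel_mul (hl : ∀ s, 0 ≤ s → lamb s ∈ Icc 0 L)
    (hl_meas : Measurable lamb) (ht : 0 ≤ t) (hx : IntervalIntegrable x volume 0 t) :
    IntervalIntegrable (fun s => lamb (t - s) * x s) volume 0 t := by
  rw [intervalIntegrable_iff_integrableOn_Ioc_of_le ht] at hx ⊢
  refine hx.bdd_mul (c := L)
    (hl_meas.comp (measurable_const.sub measurable_id)).aestronglyMeasurable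
    ((ae_restrict_iff' measurableSet_Ioc).2 <| ae_of_all _ fun s hs => ?_)
  have hls := hl (t - s) (by linarith [hs.2])
  rw [Real.norm_of_nonneg hls.1]
  exact hls.2

theorem abs_forceOfInfection_sub_le (hl : ∀ s, 0 ≤ s → lamb s ∈ Icc 0 L)
    (hl_meas : Measurable lamb) (ht : 0 ≤ t) (hx : IntervalIntegrable x volume 0 t)
    (hy : IntervalIntegrable y volume 0 t) :
    |forceOfInfection g0 lamb x t - forceOfInfection g0 lamb y t|
      ≤ L * ∫ s in 0..t, |x s - y s| := by
  unfold forceOfInfection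
  rw [add_sub_add_left_eq_sub, ← intervalIntegral.integral_sub
    (intervalIntegrable_kernel_mul hl hl_meas ht hx)
    (intervalIntegrable_kernel_mul hl hl_meas ht hy)]
  simpa only [← mul_sub] using abs_integral_kernel_mul_le hl ht (hx.sub hy)

theorem measurable_volterraRHS (hg_meas : Measurable g0) (hl_meas : Measurable lamb)
    (hxm : Measurable x) : Measurable (volterraRHS S0 g0 lamb x) := by
  have hprimitive : Measurable fun t => ∫ s in 0..t, x s :=
    Measurable.intervalIntegral_prod (f := fun _ s => x s) (hxm.comp measurable_snd) 0
  have hconv : Measurable fun t => ∫ s in 0..t, lamb (t - s) * x s :=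
    Measurable.intervalIntegral_prod (f := fun t s => lamb (t - s) * x s)
      ((hl_meas.comp (measurable_fst.sub measurable_snd)).mul (hxm.comp measurable_snd)) 0
  exact ((measurable_const.sub hprimitive).max measurable_const).mul (hg_meas.add hconv)

theorem volterraRHS_nonneg (hg : ∀ t, 0 ≤ t → g0 t ∈ Icc 0 G)
    (hl : ∀ s, 0 ≤ s → lamb s ∈ Icc 0 L) (ht : 0 ≤ t) (hx : ∀ s ∈ Icc 0 t, 0 ≤ x s) :
    0 ≤ volterraRHS S0 g0 lamb x t :=
  mul_nonneg (le_max_right _ _) (forceOfInfection_nonneg hg hl ht hx)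

theorem volterraRHS_le (hS1 : S0 ≤ 1) (hg : ∀ t, 0 ≤ t → g0 t ∈ Icc 0 G)
    (hl : ∀ s, 0 ≤ s → lamb s ∈ Icc 0 L) (ht : 0 ≤ t) (hx₀ : ∀ s ∈ Icc 0 t, 0 ≤ x s)
    (hx : IntervalIntegrable x volume 0 t) :
    volterraRHS S0 g0 lamb x t ≤ G + L * ∫ s in 0..t, x s :=
  (mul_le_of_le_one_left (forceOfInfection_nonneg hg hl ht hx₀)
    (susceptible_le_one hS1 ht hx₀)).trans (forceOfInfection_le hg hl ht hx₀ hx)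

theorem abs_volterraRHS_sub_le (hS1 : S0 ≤ 1) (hg : ∀ t, 0 ≤ t → g0 t ∈ Icc 0 G)
    (hl : ∀ s, 0 ≤ s → lamb s ∈ Icc 0 L) (hl_meas : Measurable lamb) {B s : ℝ} (hs : s ∈ Icc 0 t)
    (hxm : Measurable x) (hym : Measurable y)
    (hx : ∀ u ∈ Icc 0 t, x u ∈ Icc 0 B) (hy : ∀ u ∈ Icc 0 t, y u ∈ Icc 0 B) :
    |volterraRHS S0 g0 lamb x s - volterraRHS S0 g0 lamb y s|
      ≤ (G + L * B * t + L) * ∫ u in 0..s, |x u - y u| := by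
  have hsub : Icc 0 s ⊆ Icc 0 t := Icc_subset_Icc le_rfl hs.2
  have hxi := intervalIntegrable_of_mem_Icc hxm hs.1 fun u hu => hx u (hsub hu)
  have hyi := intervalIntegrable_of_mem_Icc hym hs.1 fun u hu => hy u (hsub hu)
  have hx₀ : ∀ u ∈ Icc 0 s, 0 ≤ x u := fun u hu => (hx u (hsub hu)).1
  have hy₀ : ∀ u ∈ Icc 0 s, 0 ≤ y u := fun u hu => (hy u (hsub hu)).1
  have hL : 0 ≤ L := nonempty_Icc.1 ⟨_, hl 0 le_rfl⟩
  have hB : 0 ≤ B := nonempty_Icc.1 ⟨_, hx s hs⟩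
  have hD : 0 ≤ ∫ u in 0..s, |x u - y u| :=
    intervalIntegral.integral_nonneg hs.1 fun _ _ => abs_nonneg _
  have hintx : ∫ u in 0..s, x u ≤ B * t := by
    have := intervalIntegral.integral_mono_on hs.1 hxi intervalIntegrable_const
      fun u hu => (hx u (hsub hu)).2
    simp only [intervalIntegral.integral_const, smul_eq_mul, sub_zero] at this
    nlinarith [hs.2]
  have hFx : forceOfInfection g0 lamb x s ≤ G + L * B * t :=
    (forceOfInfection_le hg hl hs.1 hx₀ hxi).trans (by rw [mul_assoc]; gcongr)
  set Px := susceptible S0 x s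
  set Py := susceptible S0 y s
  set Fx := forceOfInfection g0 lamb x s
  set Fy := forceOfInfection g0 lamb y s
  have hFx₀ : 0 ≤ Fx := forceOfInfection_nonneg hg hl hs.1 hx₀
  have hPy₀ : 0 ≤ Py := le_max_right _ _
  calc |Px * Fx - Py * Fy| = |(Px - Py) * Fx + Py * (Fx - Fy)| := by ring_nf
    _ ≤ |Px - Py| * Fx + Py * |Fx - Fy| := by
      grw [abs_add_le, abs_mul, abs_mul, abs_of_nonneg hFx₀, abs_of_nonneg hPy₀]
    _ ≤ (∫ u in 0..s, |x u - y u|) * (G + L * B * t) + 1 * (L * ∫ u in 0..s, |x u - y u|) := by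
      gcongr
      · exact abs_susceptible_sub_le hs.1 hxi hyi
      · exact susceptible_le_one hS1 hs.1 hy₀
      · exact abs_forceOfInfection_sub_le hl hl_meas hs.1 hxi hyi
    _ = (G + L * B * t + L) * ∫ u in 0..s, |x u - y u| := by ring

theorem tendsto_volterraRHS {X : ℕ → ℝ → ℝ} {B : ℝ} (hl : ∀ s, 0 ≤ s → lamb s ∈ Icc 0 L)
    (hl_meas : Measurable lamb) (ht : 0 ≤ t) (hXm : ∀ n, Measurable (X n))
    (hX : ∀ n, ∀ s ∈ Icc 0 t, |X n s| ≤ B)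
    (hlim : ∀ s ∈ Icc 0 t, Tendsto (fun n => X n s) atTop (𝓝 (x s))) :
    Tendsto (fun n => volterraRHS S0 g0 lamb (X n) t) atTop
      (𝓝 (volterraRHS S0 g0 lamb x t)) := by
  have hIoc : ∀ s ∈ Ι 0 t, s ∈ Icc 0 t := fun s hs => by
    rw [uIoc_of_le ht] at hs; exact Ioc_subset_Icc_self hs
  have hprimitive : Tendsto (fun n => ∫ s in 0..t, X n s) atTop (𝓝 (∫ s in 0..t, x s)) :=
    intervalIntegral.tendsto_integral_filter_of_dominated_convergence (fun _ => B)
      (Eventually.of_forall fun n => (hXm n).aestronglyMeasurable.restrict)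
      (Eventually.of_forall fun n => ae_of_all _ fun s hs => hX n s (hIoc s hs))
      intervalIntegrable_const (ae_of_all _ fun s hs => hlim s (hIoc s hs))
  have hconv : Tendsto (fun n => ∫ s in 0..t, lamb (t - s) * X n s) atTop
      (𝓝 (∫ s in 0..t, lamb (t - s) * x s)) := by
    refine intervalIntegral.tendsto_integral_filter_of_dominated_convergence (fun _ => L * B)
      (Eventually.of_forall fun n => ((hl_meas.comp (measurable_const.sub measurable_id)).mul
        (hXm n)).aestronglyMeasurable.restrict)
      (Eventually.of_forall fun n => ae_of_all _ fun s hs => ?_)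
      intervalIntegrable_const (ae_of_all _ fun s hs => (hlim s (hIoc s hs)).const_mul _)
    have hls := hl (t - s) (by linarith [(hIoc s hs).2])
    rw [Real.norm_eq_abs, abs_mul, abs_of_nonneg hls.1]
    exact mul_le_mul hls.2 (hX n s (hIoc s hs)) (abs_nonneg _) (hls.1.trans hls.2)
  exact ((tendsto_const_nhds.sub hprimitive).max tendsto_const_nhds).mul
    (tendsto_const_nhds.add hconv)

structure IsVolterraSolution (S0 : ℝ) (g0 lamb x : ℝ → ℝ) : Prop where
  measurable : Measurable x
  nonneg : ∀ t, 0 ≤ t → 0 ≤ x t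
  locallyBounded : ∀ T, 0 < T → ∃ C, ∀ t ∈ Icc (0 : ℝ) T, x t ≤ C
  eq : ∀ t, 0 ≤ t → x t = volterraRHS S0 g0 lamb x t

namespace IsVolterraSolution

theorem intervalIntegrable (hx : IsVolterraSolution S0 g0 lamb x) (ht : 0 ≤ t) :
    IntervalIntegrable x volume 0 t := by
  obtain ⟨C, hC⟩ := hx.locallyBounded (t + 1) (by linarith)
  exact intervalIntegrable_of_mem_Icc hx.measurable ht fun s hs =>
    ⟨hx.nonneg s hs.1, hC s ⟨hs.1, by linarith [hs.2]⟩⟩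

theorem integral_le (hS0 : 0 ≤ S0) (hx : IsVolterraSolution S0 g0 lamb x) (ht : 0 ≤ t) :
    ∫ s in 0..t, x s ≤ S0 :=
  integral_le_of_eq_zero_of_lt_integral ht hS0 (hx.intervalIntegrable ht) fun u hu hlt => by
    rw [hx.eq u hu.1, volterraRHS, susceptible, max_eq_right (by linarith), zero_mul]

theorem le (hS0 : 0 ≤ S0) (hS1 : S0 ≤ 1) (hg : ∀ t, 0 ≤ t → g0 t ∈ Icc 0 G)
    (hl : ∀ s, 0 ≤ s → lamb s ∈ Icc 0 L) (hx : IsVolterraSolution S0 g0 lamb x) (ht : 0 ≤ t) :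
    x t ≤ G + L * S0 := by
  have hL : 0 ≤ L := nonempty_Icc.1 ⟨_, hl 0 le_rfl⟩
  calc x t = volterraRHS S0 g0 lamb x t := hx.eq t ht
    _ ≤ G + L * ∫ s in 0..t, x s :=
      volterraRHS_le hS1 hg hl ht (fun s hs => hx.nonneg s hs.1) (hx.intervalIntegrable ht)
    _ ≤ G + L * S0 := by grw [hx.integral_le hS0 ht]

theorem le_mul_exp (hS0 : 0 ≤ S0) (hS1 : S0 ≤ 1) (hg : ∀ t, 0 ≤ t → g0 t ∈ Icc 0 G)
    (hl : ∀ s, 0 ≤ s → lamb s ∈ Icc 0 L) (hx : IsVolterraSolution S0 g0 lamb x) (ht : 0 ≤ t) :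
    x t ≤ (G + L * S0) * exp (L * t) := by
  have hL : 0 ≤ L := nonempty_Icc.1 ⟨_, hl 0 le_rfl⟩
  have hΛ : 0 ≤ G + L * S0 := add_nonneg (nonempty_Icc.1 ⟨_, hg 0 le_rfl⟩) (mul_nonneg hL hS0)
  exact (hx.le hS0 hS1 hg hl ht).trans (le_mul_of_one_le_right hΛ (one_le_exp (mul_nonneg hL ht)))

theorem unique (hS0 : 0 ≤ S0) (hS1 : S0 ≤ 1) (hg : ∀ t, 0 ≤ t → g0 t ∈ Icc 0 G)
    (hl : ∀ s, 0 ≤ s → lamb s ∈ Icc 0 L) (hl_meas : Measurable lamb)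
    (hx : IsVolterraSolution S0 g0 lamb x) (hy : IsVolterraSolution S0 g0 lamb y) (ht : 0 ≤ t) :
    x t = y t := by
  set Λ := G + L * S0
  have hL : 0 ≤ L := nonempty_Icc.1 ⟨_, hl 0 le_rfl⟩
  have hG : 0 ≤ G := nonempty_Icc.1 ⟨_, hg 0 le_rfl⟩
  have hΛ : 0 ≤ Λ := add_nonneg hG (mul_nonneg hL hS0)
  have hxΛ : ∀ s ∈ Icc 0 t, x s ∈ Icc 0 Λ := fun s hs =>
    ⟨hx.nonneg s hs.1, hx.le hS0 hS1 hg hl hs.1⟩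
  have hyΛ : ∀ s ∈ Icc 0 t, y s ∈ Icc 0 Λ := fun s hs =>
    ⟨hy.nonneg s hs.1, hy.le hS0 hS1 hg hl hs.1⟩
  set K := G + L * Λ * t + L
  have hK : 0 ≤ K := by positivity
  have hbound : ∀ n, ∀ s ∈ Icc 0 t, |x s - y s| ≤ Λ * (K * s) ^ n / n ! := by
    refine le_pow_div_factorial_of_le_integral (d := fun _ s => |x s - y s|) hK
      (fun _ _ _ => abs_nonneg _) (fun s hs => abs_sub_le_of_nonneg_of_le (hxΛ s hs).1
        (hxΛ s hs).2 (hyΛ s hs).1 (hyΛ s hs).2) fun _ s hs => ?_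
    rw [hx.eq s hs.1, hy.eq s hs.1]
    exact abs_volterraRHS_sub_le hS1 hg hl hl_meas hs hx.measurable hy.measurable hxΛ hyΛ
  have hlim : Tendsto (fun n => Λ * (K * t) ^ n / n !) atTop (𝓝 0) := by
    simpa [mul_div_assoc] using (FloorSemiring.tendsto_pow_div_factorial_atTop (K * t)).const_mul Λ
  exact sub_eq_zero.1 <| abs_nonpos_iff.1 <|
    ge_of_tendsto' hlim fun n => hbound n t ⟨ht, le_rfl⟩

end IsVolterraSolution

/-- Picard iterates, cut off to vanish on `t < 0` so that they converge at every point. -/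
noncomputable def picardIter (S0 : ℝ) (g0 lamb : ℝ → ℝ) : ℕ → ℝ → ℝ
  | 0 => 0
  | n + 1 => (Ici 0).indicator (volterraRHS S0 g0 lamb (picardIter S0 g0 lamb n))

theorem picardIter_succ_of_nonneg (n : ℕ) (ht : 0 ≤ t) :
    picardIter S0 g0 lamb (n + 1) t = volterraRHS S0 g0 lamb (picardIter S0 g0 lamb n) t :=
  indicator_of_mem (mem_Ici.2 ht) _

theorem picardIter_of_neg (n : ℕ) (ht : t < 0) : picardIter S0 g0 lamb n t = 0 := by
  cases n with
  | zero => rfl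
  | succ n => exact indicator_of_notMem (fun h => (not_le.2 ht) (mem_Ici.1 h)) _

theorem measurable_picardIter (hg_meas : Measurable g0) (hl_meas : Measurable lamb) :
    ∀ n, Measurable (picardIter S0 g0 lamb n)
  | 0 => measurable_const
  | n + 1 => (measurable_volterraRHS hg_meas hl_meas
      (measurable_picardIter hg_meas hl_meas n)).indicator measurableSet_Ici

theorem integral_mul_exp_mul (L t : ℝ) : ∫ s in 0..t, L * exp (L * s) = exp (L * t) - 1 := by
  rw [intervalIntegral.integral_const_mul, intervalIntegral.mul_integral_comp_mul_left,
    integral_exp, mul_zero, exp_zero]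

/-- The exponential envelope `(G + L S0) e^{L t}` is invariant under the Picard map since
`G + ∫₀ᵗ L (G + L S0) e^{L s} ds = (G + L S0) e^{L t} - L S0`. -/
theorem picardIter_mem_Icc (hS0 : 0 ≤ S0) (hS1 : S0 ≤ 1) (hg : ∀ t, 0 ≤ t → g0 t ∈ Icc 0 G)
    (hl : ∀ s, 0 ≤ s → lamb s ∈ Icc 0 L) (hg_meas : Measurable g0) (hl_meas : Measurable lamb)
    (n : ℕ) (ht : 0 ≤ t) :
    picardIter S0 g0 lamb n t ∈ Icc 0 ((G + L * S0) * exp (L * t)) := by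
  have hL : 0 ≤ L := nonempty_Icc.1 ⟨_, hl 0 le_rfl⟩
  have hG : 0 ≤ G := nonempty_Icc.1 ⟨_, hg 0 le_rfl⟩
  induction n generalizing t with
  | zero => exact ⟨le_rfl, by positivity⟩
  | succ n ih =>
    set X := picardIter S0 g0 lamb n
    have hX₀ : ∀ s ∈ Icc 0 t, 0 ≤ X s := fun s hs => (ih hs.1).1
    have hXi : IntervalIntegrable X volume 0 t :=
      intervalIntegrable_of_mem_Icc (C := (G + L * S0) * exp (L * t))
        (measurable_picardIter hg_meas hl_meas n) ht fun s hs =>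
        ⟨(ih hs.1).1, (ih hs.1).2.trans (by gcongr; exact hs.2)⟩
    rw [picardIter_succ_of_nonneg n ht]
    refine ⟨volterraRHS_nonneg hg hl ht hX₀, ?_⟩
    calc volterraRHS S0 g0 lamb X t ≤ G + L * ∫ s in 0..t, X s :=
          volterraRHS_le hS1 hg hl ht hX₀ hXi
      _ ≤ G + (G + L * S0) * ∫ s in 0..t, L * exp (L * s) := by
        rw [← intervalIntegral.integral_const_mul, ← intervalIntegral.integral_const_mul]
        gcongr
        refine intervalIntegral.integral_mono_on ht (hXi.const_mul L)
          (Continuous.intervalIntegrable (by fun_prop) _ _) fun s hs => ?_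
        rw [mul_left_comm]
        exact mul_le_mul_of_nonneg_left (ih hs.1).2 hL
      _ ≤ (G + L * S0) * exp (L * t) := by
        rw [integral_mul_exp_mul]
        nlinarith [mul_nonneg hL hS0]

theorem picardIter_mem_Icc_of_mem_Icc (hS0 : 0 ≤ S0) (hS1 : S0 ≤ 1)
    (hg : ∀ t, 0 ≤ t → g0 t ∈ Icc 0 G) (hl : ∀ s, 0 ≤ s → lamb s ∈ Icc 0 L)
    (hg_meas : Measurable g0) (hl_meas : Measurable lamb) (n : ℕ) {s : ℝ} (hs : s ∈ Icc 0 t) :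
    picardIter S0 g0 lamb n s ∈ Icc 0 ((G + L * S0) * exp (L * t)) := by
  have hL : 0 ≤ L := nonempty_Icc.1 ⟨_, hl 0 le_rfl⟩
  have hΛ : 0 ≤ G + L * S0 := add_nonneg (nonempty_Icc.1 ⟨_, hg 0 le_rfl⟩) (mul_nonneg hL hS0)
  have h := picardIter_mem_Icc hS0 hS1 hg hl hg_meas hl_meas n hs.1
  exact ⟨h.1, h.2.trans (by gcongr; exact hs.2)⟩

theorem exists_abs_picardIter_succ_sub_le (hS0 : 0 ≤ S0) (hS1 : S0 ≤ 1)
    (hg : ∀ t, 0 ≤ t → g0 t ∈ Icc 0 G) (hl : ∀ s, 0 ≤ s → lamb s ∈ Icc 0 L)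
    (hg_meas : Measurable g0) (hl_meas : Measurable lamb) (ht : 0 ≤ t) :
    ∃ M K : ℝ, ∀ n, ∀ s ∈ Icc 0 t,
      |picardIter S0 g0 lamb (n + 1) s - picardIter S0 g0 lamb n s| ≤ M * (K * s) ^ n / n ! := by
  have hL : 0 ≤ L := nonempty_Icc.1 ⟨_, hl 0 le_rfl⟩
  have hG : 0 ≤ G := nonempty_Icc.1 ⟨_, hg 0 le_rfl⟩
  have hX : ∀ n {s}, s ∈ Icc 0 t →
      picardIter S0 g0 lamb n s ∈ Icc 0 ((G + L * S0) * exp (L * t)) :=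
    fun n _ hs => picardIter_mem_Icc_of_mem_Icc hS0 hS1 hg hl hg_meas hl_meas n hs
  refine ⟨(G + L * S0) * exp (L * t), G + L * ((G + L * S0) * exp (L * t)) * t + L,
    le_pow_div_factorial_of_le_integral (by positivity) (fun _ _ _ => abs_nonneg _)
    (fun s hs => ?_) fun n s hs => ?_⟩
  · rw [show picardIter S0 g0 lamb 0 s = 0 from rfl, sub_zero, abs_of_nonneg (hX 1 hs).1]
    exact (hX 1 hs).2
  rw [picardIter_succ_of_nonneg (n + 1) hs.1, picardIter_succ_of_nonneg n hs.1]
  exact abs_volterraRHS_sub_le hS1 hg hl hl_meas hs (measurable_picardIter hg_meas hl_meas _)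
    (measurable_picardIter hg_meas hl_meas _) (fun _ => hX _) (fun _ => hX _)

theorem exists_tendsto_picardIter (hS0 : 0 ≤ S0) (hS1 : S0 ≤ 1)
    (hg : ∀ t, 0 ≤ t → g0 t ∈ Icc 0 G) (hl : ∀ s, 0 ≤ s → lamb s ∈ Icc 0 L)
    (hg_meas : Measurable g0) (hl_meas : Measurable lamb) :
    ∃ x : ℝ → ℝ, Measurable x ∧
      ∀ t, Tendsto (fun n => picardIter S0 g0 lamb n t) atTop (𝓝 (x t)) := by
  have hcauchy : ∀ t, CauchySeq fun n => picardIter S0 g0 lamb n t := by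
    intro t
    rcases lt_or_ge t 0 with ht | ht
    · simp only [picardIter_of_neg _ ht]
      exact cauchySeq_const 0
    obtain ⟨M, K, hMK⟩ := exists_abs_picardIter_succ_sub_le hS0 hS1 hg hl hg_meas hl_meas ht
    refine cauchySeq_of_summable_dist <| Summable.of_nonneg_of_le (fun _ => dist_nonneg)
      (fun n => ?_) ((Real.summable_pow_div_factorial (K * t)).mul_left M)
    rw [dist_comm, Real.dist_eq, ← mul_div_assoc]
    exact hMK n t ⟨ht, le_rfl⟩
  choose x hx using fun t => cauchySeq_tendsto_of_complete (hcauchy t)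
  exact ⟨x, measurable_of_tendsto_metrizable (measurable_picardIter hg_meas hl_meas)
    (tendsto_pi_nhds.2 hx), hx⟩

theorem exists_isVolterraSolution (hS0 : 0 ≤ S0) (hS1 : S0 ≤ 1)
    (hg : ∀ t, 0 ≤ t → g0 t ∈ Icc 0 G) (hl : ∀ s, 0 ≤ s → lamb s ∈ Icc 0 L)
    (hg_meas : Measurable g0) (hl_meas : Measurable lamb) :
    ∃ x, IsVolterraSolution S0 g0 lamb x := by
  obtain ⟨x, hxm, hlim⟩ := exists_tendsto_picardIter hS0 hS1 hg hl hg_meas hl_meas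
  have hX : ∀ n {s T}, s ∈ Icc 0 T →
      picardIter S0 g0 lamb n s ∈ Icc 0 ((G + L * S0) * exp (L * T)) :=
    fun n _ _ hs => picardIter_mem_Icc_of_mem_Icc hS0 hS1 hg hl hg_meas hl_meas n hs
  have hx : ∀ T, ∀ t ∈ Icc 0 T, x t ∈ Icc 0 ((G + L * S0) * exp (L * T)) := fun T t ht =>
    isClosed_Icc.mem_of_tendsto (hlim t) (Eventually.of_forall fun n => hX n ht)
  refine ⟨x, hxm, fun t ht => (hx t t ⟨ht, le_rfl⟩).1,
    fun T _ => ⟨_, fun t ht => (hx T t ht).2⟩, fun t ht => ?_⟩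
  refine tendsto_nhds_unique ((hlim t).comp (tendsto_add_atTop_nat 1)) ?_
  simp only [Function.comp_def, picardIter_succ_of_nonneg _ ht]
  refine tendsto_volterraRHS (B := (G + L * S0) * exp (L * t)) hl hl_meas ht
    (measurable_picardIter hg_meas hl_meas) (fun n s hs => ?_) fun s _ => hlim s
  rw [abs_of_nonneg (hX n hs).1]
  exact (hX n hs).2

theorem boundary_volterra_equation_general
    (lamstar : ℝ)
    (S0 : ℝ) (hS0 : S0 ∈ Set.Ioc (0:ℝ) 1)
    (I0 : ℝ)
    (g0 : ℝ → ℝ) (hg0_meas : Measurable g0)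
    (hg0 : ∀ t, 0 ≤ t → g0 t ∈ Set.Icc 0 (lamstar * I0))
    (lamb : ℝ → ℝ) (hl_meas : Measurable lamb)
    (hl : ∀ t, 0 ≤ t → lamb t ∈ Set.Icc (0:ℝ) lamstar) :
    (∃ x : ℝ → ℝ, Measurable x
      ∧ (∀ t, 0 ≤ t → 0 ≤ x t)
      ∧ (∀ T, 0 < T → ∃ C, ∀ t ∈ Set.Icc (0:ℝ) T, x t ≤ C)
      ∧ (∀ t, 0 ≤ t →
          x t = max (S0 - ∫ s in (0:ℝ)..t, x s) 0
              * (g0 t + ∫ s in (0:ℝ)..t, lamb (t - s) * x s)))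
    ∧ (∀ x₁ x₂ : ℝ → ℝ,
        Measurable x₁ → Measurable x₂ →
        (∀ t, 0 ≤ t → 0 ≤ x₁ t) → (∀ t, 0 ≤ t → 0 ≤ x₂ t) →
        (∀ T, 0 < T → ∃ C, ∀ t ∈ Set.Icc (0:ℝ) T, x₁ t ≤ C) →
        (∀ T, 0 < T → ∃ C, ∀ t ∈ Set.Icc (0:ℝ) T, x₂ t ≤ C) →
        (∀ t, 0 ≤ t → x₁ t = max (S0 - ∫ s in (0:ℝ)..t, x₁ s) 0
              * (g0 t + ∫ s in (0:ℝ)..t, lamb (t - s) * x₁ s)) →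
        (∀ t, 0 ≤ t → x₂ t = max (S0 - ∫ s in (0:ℝ)..t, x₂ s) 0
              * (g0 t + ∫ s in (0:ℝ)..t, lamb (t - s) * x₂ s)) →
        ∀ t, 0 ≤ t → x₁ t = x₂ t)
    ∧ (∀ x : ℝ → ℝ, Measurable x →
        (∀ t, 0 ≤ t → 0 ≤ x t) →
        (∀ T, 0 < T → ∃ C, ∀ t ∈ Set.Icc (0:ℝ) T, x t ≤ C) →
        (∀ t, 0 ≤ t → x t = max (S0 - ∫ s in (0:ℝ)..t, x s) 0
              * (g0 t + ∫ s in (0:ℝ)..t, lamb (t - s) * x s)) →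
        ∀ t, 0 ≤ t →
          (∫ s in (0:ℝ)..t, x s) ≤ S0
          ∧ x t ≤ lamstar * (I0 + S0) * Real.exp (lamstar * t)) := by
  obtain ⟨hS0, hS1⟩ := hS0
  refine ⟨?_, fun x₁ x₂ h₁m h₂m h₁₀ h₂₀ h₁b h₂b h₁e h₂e t ht => ?_,
    fun x hxm hx₀ hxb hxe t ht => ?_⟩
  · obtain ⟨x, hx⟩ := exists_isVolterraSolution hS0.le hS1 hg0 hl hg0_meas hl_meas
    exact ⟨x, hx.measurable, hx.nonneg, hx.locallyBounded, hx.eq⟩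
  · exact IsVolterraSolution.unique hS0.le hS1 hg0 hl hl_meas ⟨h₁m, h₁₀, h₁b, h₁e⟩
      ⟨h₂m, h₂₀, h₂b, h₂e⟩ ht
  · have hx : IsVolterraSolution S0 g0 lamb x := ⟨hxm, hx₀, hxb, hxe⟩
    rw [mul_add]
    exact ⟨hx.integral_le hS0.le ht, hx.le_mul_exp hS0.le hS1 hg0 hl ht⟩

/-- The boundary Volterra equation
`x(t) = (S̄(0) - ∫₀ᵗ x)⁺ ⋅ (g₀(t) + ∫₀ᵗ λ̄(t-s)x(s) ds)` has a unique nonnegative locally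
bounded solution, and any solution satisfies `∫₀ᵗ x ≤ S̄(0)` and
`x(t) ≤ λ*(Ī(0)+S̄(0)) e^{λ* t}`. -/
theorem boundary_volterra_equation
    (lamstar : ℝ) (hlamstar : 0 < lamstar)
    (S0 : ℝ) (hS0 : S0 ∈ Set.Ioc (0:ℝ) 1)
    (I0 : ℝ) (hI0 : I0 ∈ Set.Ioo (0:ℝ) 1)
    (g0 : ℝ → ℝ) (hg0_meas : Measurable g0)
    (hg0 : ∀ t, 0 ≤ t → g0 t ∈ Set.Icc 0 (lamstar * I0))
    (lamb : ℝ → ℝ) (hl_meas : Measurable lamb)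
    (hl : ∀ t, 0 ≤ t → lamb t ∈ Set.Icc (0:ℝ) lamstar) :
    (∃ x : ℝ → ℝ, Measurable x
      ∧ (∀ t, 0 ≤ t → 0 ≤ x t)
      ∧ (∀ T, 0 < T → ∃ C, ∀ t ∈ Set.Icc (0:ℝ) T, x t ≤ C)
      ∧ (∀ t, 0 ≤ t →
          x t = max (S0 - ∫ s in (0:ℝ)..t, x s) 0
              * (g0 t + ∫ s in (0:ℝ)..t, lamb (t - s) * x s)))
    ∧ (∀ x₁ x₂ : ℝ → ℝ,
        Measurable x₁ → Measurable x₂ →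
        (∀ t, 0 ≤ t → 0 ≤ x₁ t) → (∀ t, 0 ≤ t → 0 ≤ x₂ t) →
        (∀ T, 0 < T → ∃ C, ∀ t ∈ Set.Icc (0:ℝ) T, x₁ t ≤ C) →
        (∀ T, 0 < T → ∃ C, ∀ t ∈ Set.Icc (0:ℝ) T, x₂ t ≤ C) →
        (∀ t, 0 ≤ t → x₁ t = max (S0 - ∫ s in (0:ℝ)..t, x₁ s) 0
              * (g0 t + ∫ s in (0:ℝ)..t, lamb (t - s) * x₁ s)) →
        (∀ t, 0 ≤ t → x₂ t = max (S0 - ∫ s in (0:ℝ)..t, x₂ s) 0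
              * (g0 t + ∫ s in (0:ℝ)..t, lamb (t - s) * x₂ s)) →
        ∀ t, 0 ≤ t → x₁ t = x₂ t)
    ∧ (∀ x : ℝ → ℝ, Measurable x →
        (∀ t, 0 ≤ t → 0 ≤ x t) →
        (∀ T, 0 < T → ∃ C, ∀ t ∈ Set.Icc (0:ℝ) T, x t ≤ C) →
        (∀ t, 0 ≤ t → x t = max (S0 - ∫ s in (0:ℝ)..t, x s) 0
              * (g0 t + ∫ s in (0:ℝ)..t, lamb (t - s) * x s)) →
        ∀ t, 0 ≤ t →
          (∫ s in (0:ℝ)..t, x s) ≤ S0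
          ∧ x t ≤ lamstar * (I0 + S0) * Real.exp (lamstar * t)) :=
  boundary_volterra_equation_general lamstar S0 hS0 I0 g0 hg0_meas hg0 lamb hl_meas hl
end
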